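/- arXiv:2104.09965 — 2 statements merged into one kernel-verified Lean document; each statement's English description precedes it below -/
import Mathlib

section
/- Let p ≥ 1 and let u be a word containing no square of period at most p. Suppose u ends with a square of period i, where i > p. Let w be a square-free suffix of u that is a proper prefix of some square vv with 1 ≤ |v| ≤ p. Then |w| ≤ i. -/
/-- A square is a word of the form `u ++ u` with `u` nonempty. -/
def IsSquareWord {α : Type*} (w : List α) : Prop :=
  ∃ u : List α, u ≠ [] ∧ w = u ++ u

/-- A word is square-free if no factor of it is a square. -/
def SquareFree {α : Type*} (w : List α) : Prop :=
  ∀ t : List α, t <:+: w → ¬ IsSquareWord t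

/-- `w` contains a square of period at most `p`. -/
def ContainsSquarePeriodLe {α : Type*} (p : ℕ) (w : List α) : Prop :=
  ∃ u : List α, u ≠ [] ∧ u.length ≤ p ∧ (u ++ u) <:+: w

/-- Let `p ≥ 1` and let `u` contain no square of period at most `p`, while `u` ends
with a square of period `i > p`. If `w` is a square-free suffix of `u` that is a
proper prefix of some square `vv` with `1 ≤ |v| ≤ p`, then `|w| ≤ i`. -/
theorem stmt9 {α : Type*} (p : ℕ) (hp : 1 ≤ p) (u : List α)
    (hu : ¬ ContainsSquarePeriodLe p u)
    (i : ℕ) (hip : p < i)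
    (hend : ∃ t : List α, t.length = i ∧ (t ++ t) <:+ u)
    (w : List α) (hwsf : SquareFree w) (hwsuf : w <:+ u)
    (hwpre : ∃ v : List α, 1 ≤ v.length ∧ v.length ≤ p ∧
      w <+: (v ++ v) ∧ w.length < (v ++ v).length) :
    w.length ≤ i := by
  by_contra hlt
  push_neg at hlt
  obtain ⟨t, hti, htu⟩ := hend
  obtain ⟨v, hv1, hvp, hwv, hwlen⟩ := hwpre
  obtain ⟨r, hr⟩ := hwv
  have hn2q : w.length < 2 * v.length := by
    have := hwlen; simp only [List.length_append] at this; omega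
  have hiq : v.length < i := lt_of_le_of_lt hvp hip
  have htu' : t <:+ u := (List.suffix_append t t).trans htu
  have htw : t <:+ w := by
    rw [← List.reverse_prefix] at htu' hwsuf ⊢
    exact List.prefix_of_prefix_length_le htu' hwsuf
      (by simp only [List.length_reverse, hti]; omega)
  obtain ⟨s', hs'⟩ := htw
  have hs'len : s'.length = w.length - i := by
    have := congrArg List.length hs'
    simp only [List.length_append, hti] at this
    omega
  -- elements of t in terms of v ++ v
  have hget : ∀ j, (hj : j < i) → ∀ (h2 : w.length - i + j < (v ++ v).length),
      t[j]'(hti ▸ hj) = (v ++ v)[w.length - i + j] := by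
    intro j hj h2
    have h3 : w.length - i + j < w.length := by omega
    have e1 : t[j]'(hti ▸ hj) = w[w.length - i + j]'h3 := by
      rw [List.getElem_of_eq hs'.symm h3,
        List.getElem_append_right (by omega)]
      simp only [show w.length - i + j - s'.length = j from by omega]
    rw [e1, List.getElem_of_eq hr.symm h2]
    exact (List.getElem_append_left h3).symm
  have hkey : t.drop v.length = t.take (i - v.length) := by
    apply List.ext_getElem
    · simp only [List.length_drop, List.length_take, hti]; omega
    · intro j h1 h2
      have hj1 : j < i - v.length := by
        simp only [List.length_take, hti] at h2; omega
      rw [List.getElem_drop, List.getElem_take]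
      have b1 : w.length - i + (v.length + j) < (v ++ v).length := by
        simp only [List.length_append]; omega
      have b2 : w.length - i + j < (v ++ v).length := by
        simp only [List.length_append]; omega
      rw [hget (v.length + j) (by omega) b1, hget j (by omega) b2]
      have hlt2 : w.length - i + j < v.length := by omega
      have c1 : (v ++ v)[w.length - i + (v.length + j)]'b1
          = v[w.length - i + j]'hlt2 := by
        rw [List.getElem_append_right (by omega : v.length ≤ w.length - i + (v.length + j))]
        simp only [show w.length - i + (v.length + j) - v.length = w.length - i + j from by omega]
      have c2 : (v ++ v)[w.length - i + j]'b2 = v[w.length - i + j]'hlt2 :=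
        List.getElem_append_left hlt2
      rw [c1, c2]
  -- build the forbidden short square
  apply hu
  set E := t.take (i - v.length) with hE
  set A := t.take v.length with hA
  set G := A.drop (i - v.length) with hG
  refine ⟨E, ?_, ?_, ?_⟩
  · apply List.ne_nil_of_length_pos
    simp only [hE, List.length_take, hti]; omega
  · simp only [hE, List.length_take, hti]; omega
  · apply List.IsInfix.trans _ htu.isInfix
    have ht2 : t = A ++ E := by
      conv_lhs => rw [← List.take_append_drop v.length t, hkey]
    have ht3 : A = E ++ G := by
      conv_lhs => rw [← List.take_append_drop (i - v.length) A]
      congr 1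
      rw [hA, List.take_take, min_eq_left (by omega)]
    refine ⟨A, G ++ E, ?_⟩
    rw [ht2, ht3]
    simp [List.append_assoc]
end

section
/- Fix the alphabet A = {0,1,2,3} and p = 21. For every square-free word v over A and every word u over A, the word vu contains no square of period at most p if and only if the word Λ(v)u contains no square of period at most p, where Λ(v) is the longest suffix of v whose normalization belongs to Λ. -/
open scoped Classical

/-- A square is minimal if no proper factor of it is a square. -/
def MinimalSquare {α : Type*} (s : List α) : Prop :=
  IsSquareWord s ∧ ∀ t : List α, t <:+: s → t.length < s.length → ¬ IsSquareWord t

/-- The normalization of a word over `{0,1,2,3}`: the lexicographically smallest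
word among all its images under permutations of the alphabet. -/
noncomputable def norm4 (u : List (Fin 4)) : List (Fin 4) :=
  (Finset.image (fun π : Equiv.Perm (Fin 4) => u.map π) Finset.univ).min'
    ⟨u, Finset.mem_image.mpr ⟨Equiv.refl _, Finset.mem_univ _, by simp⟩⟩

/-- `Λ`: the set of normalized square-free prefixes of minimal squares of period
at most `21`. -/
def Lambda : Set (List (Fin 4)) :=
  {w | norm4 w = w ∧ SquareFree w ∧
    ∃ u : List (Fin 4), u ≠ [] ∧ u.length ≤ 21 ∧ MinimalSquare (u ++ u) ∧ w <+: u ++ u}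

/-- `Λ(w)`: the longest suffix of `w` whose normalization belongs to `Λ`. -/
noncomputable def lambdaOf (w : List (Fin 4)) : List (Fin 4) :=
  (w.tails.find? fun s => decide (norm4 s ∈ Lambda)).getD []

/-!
A square of period at most `21` in `vu` contains a minimal square `yy` with `|y| ≤ 21`.
As `v` is square-free, `yy` either lies in `u` or straddles the border, and then its part in
`v` is a square-free suffix of `v` that is a prefix of `yy`. Since squares, square-freeness and
minimality are invariant under permutations of the alphabet, the normalization of that part is
in `Λ`, so it is a suffix of `Λ(v)` and `yy` already occurs in `Λ(v)u`.
-/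

namespace List

variable {α : Type*}

theorem IsSuffix.append_infix_append {l₁ l₂ a b : List α} (h₁ : l₁ <:+ a) (h₂ : l₂ <+: b) :
    l₁ ++ l₂ <:+: a ++ b := by
  obtain ⟨s, rfl⟩ := h₁
  obtain ⟨t, rfl⟩ := h₂
  exact ⟨s, t, by simp⟩

theorem suffix_of_find?_tails_eq_some {p : List α → Bool} :
    ∀ {w r t : List α}, w.tails.find? p = some r → t <:+ w → p t = true → t <:+ r
  | [], _, _, _, ht, _ => by
    rw [suffix_nil.mp ht]
    exact nil_suffix
  | a :: w, r, t, hr, ht, hpt => by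
    rw [tails_cons] at hr
    by_cases hpa : p (a :: w) = true
    · rw [find?_cons_of_pos hpa, Option.some_inj] at hr
      exact hr ▸ ht
    · rw [find?_cons_of_neg hpa] at hr
      rcases suffix_cons_iff.mp ht with rfl | ht
      · exact absurd hpt hpa
      · exact suffix_of_find?_tails_eq_some hr ht hpt

end List

section Squares

variable {α β : Type*}

theorem isSquareWord_map_iff {f : α → β} (hf : Function.Injective f) {l : List α} :
    IsSquareWord (l.map f) ↔ IsSquareWord l := by
  constructor
  · rintro ⟨w, hw, hl⟩
    obtain ⟨a, b, rfl, ha, hb⟩ := List.map_eq_append_iff.mp hl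
    have hab : a = b := List.map_injective_iff.mpr hf (ha.trans hb.symm)
    refine ⟨a, ?_, by rw [hab]⟩
    rintro rfl
    exact hw (by simpa using ha.symm)
  · rintro ⟨w, hw, rfl⟩
    exact ⟨w.map f, by simpa using hw, List.map_append⟩

theorem SquareFree.of_infix {t w : List α} (hw : SquareFree w) (h : t <:+: w) : SquareFree t :=
  fun t' ht' => hw t' (ht'.trans h)

theorem SquareFree.map {f : α → β} (hf : Function.Injective f) {l : List α}
    (hl : SquareFree l) : SquareFree (l.map f) := by
  intro t ht hsq
  obtain ⟨t', ht', rfl⟩ := List.infix_map_iff.mp ht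
  exact hl t' ht' ((isSquareWord_map_iff hf).mp hsq)

theorem MinimalSquare.map {f : α → β} (hf : Function.Injective f) {l : List α}
    (hl : MinimalSquare l) : MinimalSquare (l.map f) := by
  refine ⟨(isSquareWord_map_iff hf).mpr hl.1, fun t ht hlt hsq => ?_⟩
  obtain ⟨t', ht', rfl⟩ := List.infix_map_iff.mp ht
  rw [List.length_map, List.length_map] at hlt
  exact hl.2 t' ht' hlt ((isSquareWord_map_iff hf).mp hsq)

theorem minimalSquare_pair (a : α) : MinimalSquare [a, a] := by
  refine ⟨⟨[a], by simp, rfl⟩, fun t _ hlt ⟨w, hw, htw⟩ => ?_⟩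
  have : 0 < w.length := List.length_pos_iff.mpr hw
  simp only [htw, List.length_append, List.length_cons, List.length_nil] at hlt
  omega

theorem squareFree_nil : SquareFree ([] : List α) := by
  rintro t ht ⟨w, hw, rfl⟩
  exact hw (List.append_eq_nil_iff.mp (List.infix_nil.mp ht)).1

/-- A shortest square factor of a square is a minimal square. -/
theorem IsSquareWord.exists_minimalSquare_infix {s : List α} (hs : IsSquareWord s) :
    ∃ m, m <:+: s ∧ MinimalSquare m := by
  have hex : ∃ n, ∃ t, t <:+: s ∧ IsSquareWord t ∧ t.length = n :=
    ⟨_, s, List.infix_refl s, hs, rfl⟩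
  obtain ⟨t, hts, ht, hlen⟩ := Nat.find_spec hex
  refine ⟨t, hts, ht, fun t' ht't hlt hsq => ?_⟩
  exact Nat.find_min hex (hlen ▸ hlt) ⟨t', ht't.trans hts, hsq, rfl⟩

theorem ContainsSquarePeriodLe.mono_infix {p : ℕ} {w w' : List α}
    (h : ContainsSquarePeriodLe p w) (hw : w <:+: w') : ContainsSquarePeriodLe p w' := by
  obtain ⟨x, hx, hxp, hxw⟩ := h
  exact ⟨x, hx, hxp, hxw.trans hw⟩

theorem containsSquarePeriodLe_iff_exists_minimalSquare {p : ℕ} {w : List α} :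
    ContainsSquarePeriodLe p w ↔
      ∃ y, y ≠ [] ∧ y.length ≤ p ∧ MinimalSquare (y ++ y) ∧ y ++ y <:+: w := by
  constructor
  · rintro ⟨x, hx, hxp, hxw⟩
    obtain ⟨m, hmx, hm⟩ := IsSquareWord.exists_minimalSquare_infix ⟨x, hx, rfl⟩
    obtain ⟨y, hy, rfl⟩ := hm.1
    have hyx := hmx.length_le
    simp only [List.length_append] at hyx
    exact ⟨y, hy, by omega, hm, hmx.trans hxw⟩
  · rintro ⟨y, hy, hyp, -, hyw⟩
    exact ⟨y, hy, hyp, hyw⟩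

end Squares

section Normalization

theorem exists_perm_norm4_eq_map (u : List (Fin 4)) :
    ∃ π : Equiv.Perm (Fin 4), norm4 u = u.map π := by
  obtain ⟨π, -, h⟩ := Finset.mem_image.mp (Finset.min'_mem _ _ : norm4 u ∈ _)
  exact ⟨π, h.symm⟩

theorem norm4_map_perm (u : List (Fin 4)) (π : Equiv.Perm (Fin 4)) :
    norm4 (u.map π) = norm4 u := by
  have hs : Finset.image (fun σ : Equiv.Perm (Fin 4) => (u.map π).map σ) Finset.univ
      = Finset.image (fun σ : Equiv.Perm (Fin 4) => u.map σ) Finset.univ := by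
    ext w
    simp only [Finset.mem_image, Finset.mem_univ, true_and, List.map_map]
    constructor
    · rintro ⟨σ, rfl⟩
      exact ⟨π.trans σ, rfl⟩
    · rintro ⟨τ, rfl⟩
      exact ⟨π.symm.trans τ, by simp [Function.comp_def]⟩
  unfold norm4
  congr 1

theorem norm4_mem_Lambda_of_prefix {t y : List (Fin 4)} (ht : SquareFree t) (hy : y ≠ [])
    (hyl : y.length ≤ 21) (hmin : MinimalSquare (y ++ y)) (hty : t <+: y ++ y) :
    norm4 t ∈ Lambda := by
  obtain ⟨π, hπ⟩ := exists_perm_norm4_eq_map t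
  refine ⟨by rw [hπ, norm4_map_perm, ← hπ], hπ ▸ ht.map π.injective, y.map π, by simpa using hy,
    by simpa using hyl, ?_, ?_⟩
  · rw [← List.map_append]
    exact hmin.map π.injective
  · rw [hπ, ← List.map_append]
    exact hty.map π

theorem norm4_nil_mem_Lambda : norm4 [] ∈ Lambda :=
  norm4_mem_Lambda_of_prefix squareFree_nil (y := [0]) (by simp) (by simp)
    (minimalSquare_pair 0) List.nil_prefix

end Normalization

section LambdaOf

theorem find?_tails_eq_some_lambdaOf (w : List (Fin 4)) :
    w.tails.find? (fun s => decide (norm4 s ∈ Lambda)) = some (lambdaOf w) := by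
  obtain ⟨r, hr⟩ := Option.isSome_iff_exists.mp <|
    List.find?_isSome (p := fun s => decide (norm4 s ∈ Lambda)).mpr
      ⟨[], (List.mem_tails _ _).mpr List.nil_suffix, decide_eq_true norm4_nil_mem_Lambda⟩
  rw [lambdaOf, hr, Option.getD_some]

theorem lambdaOf_suffix (w : List (Fin 4)) : lambdaOf w <:+ w :=
  (List.mem_tails _ _).mp (List.mem_of_find?_eq_some (find?_tails_eq_some_lambdaOf w))

theorem suffix_lambdaOf {t w : List (Fin 4)} (htw : t <:+ w) (ht : norm4 t ∈ Lambda) :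
    t <:+ lambdaOf w :=
  List.suffix_of_find?_tails_eq_some (find?_tails_eq_some_lambdaOf w) htw (decide_eq_true ht)

theorem SquareFree.minimalSquare_infix_lambdaOf_append {v u y : List (Fin 4)}
    (hv : SquareFree v) (hy : y ≠ []) (hyl : y.length ≤ 21) (hmin : MinimalSquare (y ++ y))
    (h : y ++ y <:+: v ++ u) : y ++ y <:+: lambdaOf v ++ u := by
  rcases List.infix_append_iff.mp h with hyv | hyu | ⟨l₁, l₂, hyy, hl₁, hl₂⟩
  · exact absurd ⟨y, hy, rfl⟩ (hv _ hyv)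
  · exact hyu.trans List.infix_append_right
  · have hl₁y : l₁ <+: y ++ y := hyy ▸ List.prefix_append l₁ l₂
    have hΛ := norm4_mem_Lambda_of_prefix (hv.of_infix hl₁.isInfix) hy hyl hmin hl₁y
    exact hyy ▸ (suffix_lambdaOf hl₁ hΛ).append_infix_append hl₂

end LambdaOf

/-- For every square-free word `v` over `{0,1,2,3}` and every word `u`, the word `vu`
contains no square of period at most `21` if and only if `Λ(v)u` contains no square
of period at most `21`. -/
theorem stmt10 (v u : List (Fin 4)) (hv : SquareFree v) :
    ¬ ContainsSquarePeriodLe 21 (v ++ u) ↔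
      ¬ ContainsSquarePeriodLe 21 (lambdaOf v ++ u) := by
  refine not_congr ⟨fun h => ?_, fun h => h.mono_infix ?_⟩
  · obtain ⟨y, hy, hyl, hmin, hyvu⟩ := containsSquarePeriodLe_iff_exists_minimalSquare.mp h
    exact containsSquarePeriodLe_iff_exists_minimalSquare.mpr
      ⟨y, hy, hyl, hmin, hv.minimalSquare_infix_lambdaOf_append hy hyl hmin hyvu⟩
  · exact (lambdaOf_suffix v).append_infix_append (List.prefix_refl u)
end
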